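/- arXiv:1310.6310 — 2 statements merged into one kernel-verified Lean document; each statement's English description precedes it below -/
import Mathlib

section
/- Suppose the 2×2 matrix-valued differentiable functions B, C, X of a real variable x (with values being operators B(x): ℂ² → K, C(x): K → ℂ², X(x): K → K on a finite-dimensional complex inner product space K) satisfy B'(x) = -(A·B(x)·σ₂ + B(x)·γ)·σ₁⁻¹, C'(x) = σ₁⁻¹·(-σ₂·C(x)·A_ζ + γ·C(x)), and X'(x) = B(x)·σ₂·C(x), where σ₁ = σ₁* is invertible, σ₂ = σ₂*, γ* = -γ, and A, A_ζ are fixed operators on K. If the Lyapunov equation A·X(x₀) + X(x₀)·A_ζ + B(x₀)·σ₁·C(x₀) = 0 holds at some x₀, then it holds for all x ∈ ℝ. -/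
open Matrix

/-!
Write `F = A X + X A_ζ + B σ₁ C`. Along the flow, `B' σ₁ = -(A B σ₂ + B γ)` and
`σ₁ C' = -σ₂ C A_ζ + γ C`, so in `F' = A B σ₂ C + B σ₂ C A_ζ + B' σ₁ C + B σ₁ C'` all terms cancel.
Hence `F` is constant, and it vanishes at `x₀`.
-/

section EntrywiseDeriv

variable {𝕜 𝔸 : Type*} [NontriviallyNormedField 𝕜] [NormedRing 𝔸] [NormedAlgebra 𝕜 𝔸]
  {l m n : Type*}

-- Matrices carry no default norm in Mathlib, so matrix-valued derivatives are taken entrywise.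
def HasEntrywiseDerivAt (M : 𝕜 → Matrix m n 𝔸) (M' : Matrix m n 𝔸) (x : 𝕜) : Prop :=
  ∀ i j, HasDerivAt (fun y => M y i j) (M' i j) x

theorem hasEntrywiseDerivAt_const (M : Matrix m n 𝔸) (x : 𝕜) :
    HasEntrywiseDerivAt (fun _ => M) 0 x :=
  fun i j => hasDerivAt_const x (M i j)

theorem HasEntrywiseDerivAt.add {M N : 𝕜 → Matrix m n 𝔸} {M' N' : Matrix m n 𝔸} {x : 𝕜}
    (hM : HasEntrywiseDerivAt M M' x) (hN : HasEntrywiseDerivAt N N' x) :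
    HasEntrywiseDerivAt (fun y => M y + N y) (M' + N') x :=
  fun i j => (hM i j).add (hN i j)

theorem HasEntrywiseDerivAt.mul [Fintype m] {M : 𝕜 → Matrix l m 𝔸} {N : 𝕜 → Matrix m n 𝔸}
    {M' : Matrix l m 𝔸} {N' : Matrix m n 𝔸} {x : 𝕜}
    (hM : HasEntrywiseDerivAt M M' x) (hN : HasEntrywiseDerivAt N N' x) :
    HasEntrywiseDerivAt (fun y => M y * N y) (M' * N x + M x * N') x := fun i j => by
  simpa only [mul_apply, Matrix.add_apply, Finset.sum_add_distrib] using
    HasDerivAt.fun_sum fun k _ => (hM i k).fun_mul (hN k j)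

theorem HasEntrywiseDerivAt.const_mul [Fintype m] {N : 𝕜 → Matrix m n 𝔸} {N' : Matrix m n 𝔸} {x : 𝕜}
    (M : Matrix l m 𝔸) (hN : HasEntrywiseDerivAt N N' x) :
    HasEntrywiseDerivAt (fun y => M * N y) (M * N') x := by
  simpa using (hasEntrywiseDerivAt_const M x).mul hN

theorem HasEntrywiseDerivAt.mul_const [Fintype m] {M : 𝕜 → Matrix l m 𝔸} {M' : Matrix l m 𝔸} {x : 𝕜}
    (hM : HasEntrywiseDerivAt M M' x) (N : Matrix m n 𝔸) :
    HasEntrywiseDerivAt (fun y => M y * N) (M' * N) x := by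
  simpa using hM.mul (hasEntrywiseDerivAt_const N x)

end EntrywiseDeriv

theorem eq_of_hasEntrywiseDerivAt_zero {𝕜 𝔸 m n : Type*} [RCLike 𝕜] [NormedRing 𝔸]
    [NormedAlgebra 𝕜 𝔸] {M : 𝕜 → Matrix m n 𝔸} (hM : ∀ x, HasEntrywiseDerivAt M 0 x)
    (x y : 𝕜) : M x = M y :=
  Matrix.ext fun i j =>
    is_const_of_deriv_eq_zero (fun z => (hM z i j).differentiableAt) (fun z => (hM z i j).deriv) x y

theorem lyapunov_flow_derivative_eq_zero {R n k : Type*} [CommRing R] [Fintype n] [Fintype k]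
    [DecidableEq k] (A Aζ : Matrix n n R) {σ₁ : Matrix k k R} (hσ₁ : IsUnit σ₁.det)
    (σ₂ γ : Matrix k k R) (B : Matrix n k R) (C : Matrix k n R) :
    A * (B * σ₂ * C) + B * σ₂ * C * Aζ
      + ((-(A * B * σ₂ + B * γ) * σ₁⁻¹) * σ₁ * C
        + B * σ₁ * (σ₁⁻¹ * (-(σ₂ * C * Aζ) + γ * C))) = 0 := by
  rw [Matrix.mul_assoc _ σ₁⁻¹ σ₁, nonsing_inv_mul σ₁ hσ₁, Matrix.mul_one,
    Matrix.mul_assoc B σ₁, ← Matrix.mul_assoc σ₁, mul_nonsing_inv σ₁ hσ₁, Matrix.one_mul]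
  simp only [Matrix.neg_mul, Matrix.add_mul, Matrix.mul_add, Matrix.mul_neg, Matrix.mul_assoc]
  abel

theorem stmt_5_general {n : ℕ}
    (A Aζ : Matrix (Fin n) (Fin n) ℂ)
    (σ₁ σ₂ γ : Matrix (Fin 2) (Fin 2) ℂ)
    (hσ₁inv : IsUnit σ₁.det)
    (B : ℝ → Matrix (Fin n) (Fin 2) ℂ)
    (C : ℝ → Matrix (Fin 2) (Fin n) ℂ)
    (X : ℝ → Matrix (Fin n) (Fin n) ℂ)
    (hB : ∀ (x : ℝ) (i : Fin n) (j : Fin 2),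
      HasDerivAt (fun y => B y i j) ((-(A * B x * σ₂ + B x * γ) * σ₁⁻¹) i j) x)
    (hC : ∀ (x : ℝ) (i : Fin 2) (j : Fin n),
      HasDerivAt (fun y => C y i j) ((σ₁⁻¹ * (-(σ₂ * C x * Aζ) + γ * C x)) i j) x)
    (hX : ∀ (x : ℝ) (i j : Fin n),
      HasDerivAt (fun y => X y i j) ((B x * σ₂ * C x) i j) x)
    (x₀ : ℝ) (h0 : A * X x₀ + X x₀ * Aζ + B x₀ * σ₁ * C x₀ = 0) :
    ∀ x : ℝ, A * X x + X x * Aζ + B x * σ₁ * C x = 0 := by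
  have hF : ∀ x, HasEntrywiseDerivAt (fun y => A * X y + X y * Aζ + B y * σ₁ * C y) 0 x := by
    intro x
    have hB' : HasEntrywiseDerivAt B _ x := hB x
    have hC' : HasEntrywiseDerivAt C _ x := hC x
    have hX' : HasEntrywiseDerivAt X _ x := hX x
    have h := ((hX'.const_mul A).add (hX'.mul_const Aζ)).add ((hB'.mul_const σ₁).mul hC')
    rwa [lyapunov_flow_derivative_eq_zero A Aζ hσ₁inv σ₂ γ (B x) (C x)] at h
  intro x
  rw [eq_of_hasEntrywiseDerivAt_zero hF x x₀, h0]

/-- Permanence of the Lyapunov equation along the prevessel flow. -/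
theorem stmt_5 {n : ℕ}
    (A Aζ : Matrix (Fin n) (Fin n) ℂ)
    (σ₁ σ₂ γ : Matrix (Fin 2) (Fin 2) ℂ)
    (hσ₁herm : σ₁ᴴ = σ₁) (hσ₁inv : IsUnit σ₁.det)
    (hσ₂herm : σ₂ᴴ = σ₂) (hγ : γᴴ = -γ)
    (B : ℝ → Matrix (Fin n) (Fin 2) ℂ)
    (C : ℝ → Matrix (Fin 2) (Fin n) ℂ)
    (X : ℝ → Matrix (Fin n) (Fin n) ℂ)
    (hB : ∀ (x : ℝ) (i : Fin n) (j : Fin 2),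
      HasDerivAt (fun y => B y i j) ((-(A * B x * σ₂ + B x * γ) * σ₁⁻¹) i j) x)
    (hC : ∀ (x : ℝ) (i : Fin 2) (j : Fin n),
      HasDerivAt (fun y => C y i j) ((σ₁⁻¹ * (-(σ₂ * C x * Aζ) + γ * C x)) i j) x)
    (hX : ∀ (x : ℝ) (i j : Fin n),
      HasDerivAt (fun y => X y i j) ((B x * σ₂ * C x) i j) x)
    (x₀ : ℝ) (h0 : A * X x₀ + X x₀ * Aζ + B x₀ * σ₁ * C x₀ = 0) :
    ∀ x : ℝ, A * X x + X x * Aζ + B x * σ₁ * C x = 0 :=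
  stmt_5_general A Aζ σ₁ σ₂ γ hσ₁inv B C X hB hC hX x₀ h0
end

section
/- Let k, m ∈ ℝ with k ≠ 0, and define β(x,t) = -2k²·(e^{8k²mt} + 2e^{4k²x})/(e^{8k²mt} - 2e^{4k²x}) on the set Ω = {(x,t) : e^{8k²mt} ≠ 2e^{4k²x}}. Then β satisfies ∂²β/∂t² = ∂/∂x[ -(1/2)(β')² - (1/4)β''' + ((β_t)² + (1/4)(β'')²)/β' ] at every point of Ω where β' ≠ 0. -/
/-!
β depends on (x, t) only through the phase ξ = 4k²x - 8k²mt: β = -2k² f(ξ) with the profile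
f(ξ) = (1 + 2e^ξ)/(1 - 2e^ξ). Hence β_t = -2m β' and β_tt = 4m² β''. In the flux
F = -(1/2)β'² - (1/4)β''' + (β_t² + (1/4)β''²)/β' of the equation β_tt = ∂ₓF, the term
β_t²/β' = 4m² β' therefore accounts for β_tt, while the rest of F is 32k⁸ (f''' - f'² - f''²/f'),
which vanishes because the profile satisfies f' f''' - f''² = f'³.
-/

noncomputable section

/-- One-dimensional exponential soliton. -/
def beta (k m : ℝ) (x t : ℝ) : ℝ :=
  -2 * k ^ 2 * (Real.exp (8 * k ^ 2 * m * t) + 2 * Real.exp (4 * k ^ 2 * x)) /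
    (Real.exp (8 * k ^ 2 * m * t) - 2 * Real.exp (4 * k ^ 2 * x))

def bx (k m : ℝ) (x t : ℝ) : ℝ := deriv (fun y => beta k m y t) x
def bxx (k m : ℝ) (x t : ℝ) : ℝ := deriv (fun y => bx k m y t) x
def bxxx (k m : ℝ) (x t : ℝ) : ℝ := deriv (fun y => bxx k m y t) x
def bt (k m : ℝ) (x t : ℝ) : ℝ := deriv (fun s => beta k m x s) t
def btt (k m : ℝ) (x t : ℝ) : ℝ := deriv (fun s => bt k m x s) t

open Real Filter Topology

theorem deriv_eq_of_eventuallyEq_const_mul_comp {f φ g : ℝ → ℝ} {f' φ' C x : ℝ}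
    (hφ : HasDerivAt φ φ' x) (hf : HasDerivAt f f' (φ x))
    (hg : g =ᶠ[𝓝 x] fun y => C * f (φ y)) : deriv g x = C * φ' * f' := by
  rw [hg.deriv_eq]
  exact ((hf.comp x hφ).const_mul C).deriv.trans (by ring)

namespace Soliton

def profile (ξ : ℝ) : ℝ := (1 + 2 * exp ξ) / (1 - 2 * exp ξ)

def profile₁ (ξ : ℝ) : ℝ := 4 * exp ξ / (1 - 2 * exp ξ) ^ 2

def profile₂ (ξ : ℝ) : ℝ := 4 * exp ξ * (1 + 2 * exp ξ) / (1 - 2 * exp ξ) ^ 3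

def profile₃ (ξ : ℝ) : ℝ :=
  4 * exp ξ * (1 + 8 * exp ξ + 4 * exp ξ ^ 2) / (1 - 2 * exp ξ) ^ 4

section Profile

variable {ξ : ℝ}

theorem hasDerivAt_profile (h : 1 - 2 * exp ξ ≠ 0) : HasDerivAt profile (profile₁ ξ) ξ := by
  have he := (hasDerivAt_exp ξ).const_mul 2
  have := (he.const_add 1).div (he.const_sub 1) h
  refine this.congr_deriv ?_
  rw [profile₁]
  field_simp
  ring

theorem hasDerivAt_profile₁ (h : 1 - 2 * exp ξ ≠ 0) : HasDerivAt profile₁ (profile₂ ξ) ξ := by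
  have he := hasDerivAt_exp ξ
  have := (he.const_mul 4).div ((he.const_mul 2).const_sub 1 |>.pow 2) (pow_ne_zero 2 h)
  refine this.congr_deriv ?_
  simp only [Pi.pow_apply]
  rw [profile₂, div_eq_div_iff (pow_ne_zero 2 (pow_ne_zero 2 h)) (pow_ne_zero 3 h)]
  push_cast
  ring

theorem hasDerivAt_profile₂ (h : 1 - 2 * exp ξ ≠ 0) : HasDerivAt profile₂ (profile₃ ξ) ξ := by
  have he := hasDerivAt_exp ξ
  have := ((he.const_mul 4).mul ((he.const_mul 2).const_add 1)).div
    ((he.const_mul 2).const_sub 1 |>.pow 3) (pow_ne_zero 3 h)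
  refine this.congr_deriv ?_
  simp only [Pi.pow_apply, Pi.mul_apply]
  rw [profile₃, div_eq_div_iff (pow_ne_zero 2 (pow_ne_zero 3 h)) (pow_ne_zero 4 h)]
  push_cast
  ring

theorem profile₁_ne_zero (h : 1 - 2 * exp ξ ≠ 0) : profile₁ ξ ≠ 0 :=
  div_ne_zero (by positivity) (pow_ne_zero 2 h)

theorem profile₁_mul_profile₃_sub_sq :
    profile₁ ξ * profile₃ ξ - profile₂ ξ ^ 2 = profile₁ ξ ^ 3 := by
  rw [profile₁, profile₂, profile₃]
  -- a polynomial identity in `exp ξ` and `(1 - 2 * exp ξ)⁻¹`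
  generalize 1 - 2 * exp ξ = D
  ring

end Profile

def phase (k m x t : ℝ) : ℝ := 4 * k ^ 2 * x - 8 * k ^ 2 * m * t

section Wave

variable {k m x t : ℝ}

theorem hasDerivAt_phase_x : HasDerivAt (fun y => phase k m y t) (4 * k ^ 2) x := by
  simpa [phase] using ((hasDerivAt_id x).const_mul (4 * k ^ 2)).sub_const (8 * k ^ 2 * m * t)

theorem hasDerivAt_phase_t : HasDerivAt (fun s => phase k m x s) (-(8 * k ^ 2 * m)) t := by
  simpa [phase] using ((hasDerivAt_id t).const_mul (8 * k ^ 2 * m)).const_sub (4 * k ^ 2 * x)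

theorem eventually_one_sub_two_mul_exp_phase_ne_zero_x (h : 1 - 2 * exp (phase k m x t) ≠ 0) :
    ∀ᶠ y in 𝓝 x, 1 - 2 * exp (phase k m y t) ≠ 0 :=
  ContinuousAt.eventually_ne (by unfold phase; fun_prop) h

theorem eventually_one_sub_two_mul_exp_phase_ne_zero_t (h : 1 - 2 * exp (phase k m x t) ≠ 0) :
    ∀ᶠ s in 𝓝 t, 1 - 2 * exp (phase k m x s) ≠ 0 :=
  ContinuousAt.eventually_ne (by unfold phase; fun_prop) h

theorem one_sub_two_mul_exp_phase_ne_zero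
    (hΩ : exp (8 * k ^ 2 * m * t) ≠ 2 * exp (4 * k ^ 2 * x)) :
    1 - 2 * exp (phase k m x t) ≠ 0 := by
  rw [phase, exp_sub, sub_ne_zero, ne_comm, ← mul_div_assoc]
  exact div_ne_one_of_ne hΩ.symm

theorem beta_eq_profile_phase : beta k m x t = -2 * k ^ 2 * profile (phase k m x t) := by
  have ha := (exp_pos (8 * k ^ 2 * m * t)).ne'
  rw [beta, mul_div_assoc, profile, phase, exp_sub, ← mul_div_mul_left _ (1 - _) ha]
  congr 2 <;> field_simp

theorem bx_eq_profile₁ (h : 1 - 2 * exp (phase k m x t) ≠ 0) :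
    bx k m x t = -8 * k ^ 4 * profile₁ (phase k m x t) := by
  rw [bx, deriv_eq_of_eventuallyEq_const_mul_comp hasDerivAt_phase_x (hasDerivAt_profile h)
    (.of_forall fun y => beta_eq_profile_phase)]
  ring

theorem bxx_eq_profile₂ (h : 1 - 2 * exp (phase k m x t) ≠ 0) :
    bxx k m x t = -32 * k ^ 6 * profile₂ (phase k m x t) := by
  have hbx : (fun y => bx k m y t) =ᶠ[𝓝 x] fun y => -8 * k ^ 4 * profile₁ (phase k m y t) := by
    filter_upwards [eventually_one_sub_two_mul_exp_phase_ne_zero_x h] with y hy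
    exact bx_eq_profile₁ hy
  rw [bxx, deriv_eq_of_eventuallyEq_const_mul_comp hasDerivAt_phase_x (hasDerivAt_profile₁ h) hbx]
  ring

theorem bxxx_eq_profile₃ (h : 1 - 2 * exp (phase k m x t) ≠ 0) :
    bxxx k m x t = -128 * k ^ 8 * profile₃ (phase k m x t) := by
  have hbxx : (fun y => bxx k m y t) =ᶠ[𝓝 x] fun y => -32 * k ^ 6 * profile₂ (phase k m y t) := by
    filter_upwards [eventually_one_sub_two_mul_exp_phase_ne_zero_x h] with y hy
    exact bxx_eq_profile₂ hy
  rw [bxxx,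
    deriv_eq_of_eventuallyEq_const_mul_comp hasDerivAt_phase_x (hasDerivAt_profile₂ h) hbxx]
  ring

theorem bt_eq_profile₁ (h : 1 - 2 * exp (phase k m x t) ≠ 0) :
    bt k m x t = 16 * k ^ 4 * m * profile₁ (phase k m x t) := by
  rw [bt, deriv_eq_of_eventuallyEq_const_mul_comp hasDerivAt_phase_t (hasDerivAt_profile h)
    (.of_forall fun s => beta_eq_profile_phase)]
  ring

theorem btt_eq_profile₂ (h : 1 - 2 * exp (phase k m x t) ≠ 0) :
    btt k m x t = -128 * k ^ 6 * m ^ 2 * profile₂ (phase k m x t) := by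
  have hbt : (fun s => bt k m x s) =ᶠ[𝓝 t] fun s => 16 * k ^ 4 * m * profile₁ (phase k m x s) := by
    filter_upwards [eventually_one_sub_two_mul_exp_phase_ne_zero_t h] with s hs
    exact bt_eq_profile₁ hs
  rw [btt, deriv_eq_of_eventuallyEq_const_mul_comp hasDerivAt_phase_t (hasDerivAt_profile₁ h) hbt]
  ring

end Wave

theorem flux_eq_profile₁ {ξ : ℝ} (h : 1 - 2 * exp ξ ≠ 0) (k m : ℝ) :
    -(1 / 2) * (-8 * k ^ 4 * profile₁ ξ) ^ 2 - 1 / 4 * (-128 * k ^ 8 * profile₃ ξ) +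
      ((16 * k ^ 4 * m * profile₁ ξ) ^ 2 + 1 / 4 * (-32 * k ^ 6 * profile₂ ξ) ^ 2) /
        (-8 * k ^ 4 * profile₁ ξ) = -32 * k ^ 4 * m ^ 2 * profile₁ ξ := by
  rcases eq_or_ne k 0 with rfl | hk
  · simp
  have hode := profile₁_mul_profile₃_sub_sq (ξ := ξ)
  have hp₁ := profile₁_ne_zero h
  field_simp
  linear_combination 2048 * k ^ 4 * hode

end Soliton

open Soliton in
theorem stmt_14_general (k m : ℝ) (x t : ℝ)
    (hΩ : Real.exp (8 * k ^ 2 * m * t) ≠ 2 * Real.exp (4 * k ^ 2 * x)) :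
    btt k m x t =
      deriv (fun y => -(1 / 2) * (bx k m y t) ^ 2 - (1 / 4) * bxxx k m y t +
        ((bt k m y t) ^ 2 + (1 / 4) * (bxx k m y t) ^ 2) / bx k m y t) x := by
  have h := one_sub_two_mul_exp_phase_ne_zero hΩ
  have hflux : (fun y => -(1 / 2) * (bx k m y t) ^ 2 - (1 / 4) * bxxx k m y t +
      ((bt k m y t) ^ 2 + (1 / 4) * (bxx k m y t) ^ 2) / bx k m y t)
      =ᶠ[𝓝 x] fun y => -32 * k ^ 4 * m ^ 2 * profile₁ (phase k m y t) := by
    filter_upwards [eventually_one_sub_two_mul_exp_phase_ne_zero_x h] with y hy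
    rw [bx_eq_profile₁ hy, bxx_eq_profile₂ hy, bxxx_eq_profile₃ hy, bt_eq_profile₁ hy,
      flux_eq_profile₁ hy]
  rw [btt_eq_profile₂ h,
    deriv_eq_of_eventuallyEq_const_mul_comp hasDerivAt_phase_x (hasDerivAt_profile₁ h) hflux]
  ring

/-- β(x,t) = -2k²(e^{8k²mt}+2e^{4k²x})/(e^{8k²mt}-2e^{4k²x}) satisfies the canonical PDE
    ∂²β/∂t² = ∂/∂x[-(1/2)(β')² - (1/4)β''' + ((β_t)² + (1/4)(β'')²)/β']. -/
theorem stmt_14 (k m : ℝ) (hk : k ≠ 0) (x t : ℝ)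
    (hΩ : Real.exp (8 * k ^ 2 * m * t) ≠ 2 * Real.exp (4 * k ^ 2 * x))
    (hbx : bx k m x t ≠ 0) :
    btt k m x t =
      deriv (fun y => -(1 / 2) * (bx k m y t) ^ 2 - (1 / 4) * bxxx k m y t +
        ((bt k m y t) ^ 2 + (1 / 4) * (bxx k m y t) ^ 2) / bx k m y t) x :=
  stmt_14_general k m x t hΩ

end
end
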